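/- Let G be a connected graph of order n ≥ 3 with p pendant vertices, and α ∈ [0,1]. Then A_α(G) has at least p eigenvalues ≥ α and at least p eigenvalues ≤ α (counting multiplicity). -/

import Mathlib

/-- The `A_α`-matrix of a graph: `α·D(G) + (1-α)·A(G)`. -/
noncomputable def Aalpha {n : ℕ} (α : ℝ) (G : SimpleGraph (Fin n)) [DecidableRel G.Adj] :
    Matrix (Fin n) (Fin n) ℝ :=
  α • Matrix.diagonal (fun v => (G.degree v : ℝ)) + (1 - α) • G.adjMatrix ℝ

lemma Aalpha_isHermitian {n : ℕ} (α : ℝ) (G : SimpleGraph (Fin n)) [DecidableRel G.Adj] :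
    (Aalpha α G).IsHermitian := by
  apply Matrix.IsHermitian.ext
  intro i j
  by_cases h : G.Adj i j <;> by_cases hij : i = j <;>
    simp_all [Aalpha, Matrix.diagonal_apply, SimpleGraph.adj_comm, eq_comm]

/-!
The pendant vertices of a connected graph on at least three vertices are pairwise nonadjacent, so
the principal submatrix of `A_α(G)` on them is `α • 1`, and the Rayleigh quotient of `A_α(G)` is
constantly `α` on the span `W` of the corresponding coordinate vectors. Expanding in an orthonormal
eigenbasis, a nonzero vector orthogonal to every eigenvector with eigenvalue `≥ α` has Rayleigh
quotient `< α`; hence `W` embeds into the coordinates along those eigenvectors and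
`p = dim W ≤ #{i | α ≤ λᵢ}`. Applying this to `-A_α(G)` gives the other bound.
-/

open Finset Module
open scoped RealInnerProductSpace

section RayleighQuotient

variable {E ι : Type*} [NormedAddCommGroup E] [InnerProductSpace ℝ E] [Fintype ι]

theorem Submodule.finrank_le_card_of_inner_eq_zero (W : Submodule ℝ E) (v : ι → E) (s : Finset ι)
    (h : ∀ x ∈ W, (∀ i ∈ s, ⟪v i, x⟫ = 0) → x = 0) :
    finrank ℝ W ≤ #s := by
  let f : W →ₗ[ℝ] s → ℝ := LinearMap.pi fun i => (innerₛₗ ℝ (v i)).comp W.subtype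
  have hf : Function.Injective f := by
    rw [← LinearMap.ker_eq_bot, Submodule.eq_bot_iff]
    intro x hx
    exact Subtype.ext <| h x x.2 fun i hi => congrFun (LinearMap.mem_ker.mp hx) ⟨i, hi⟩
  simpa using LinearMap.finrank_le_finrank_of_injective hf

variable {T : E →ₗ[ℝ] E} {b : OrthonormalBasis ι ℝ E} {μ : ι → ℝ}

theorem OrthonormalBasis.inner_apply_of_apply_eq_smul (hb : ∀ i, T (b i) = μ i • b i)
    (i : ι) (x : E) : ⟪b i, T x⟫ = μ i * ⟪b i, x⟫ := by
  classical
  conv_lhs => rw [← b.sum_repr' x]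
  simp only [map_sum, map_smul, hb, inner_sum, inner_smul_right, b.inner_eq_ite]
  simp [mul_comm]

theorem OrthonormalBasis.inner_map_self_sub_eq_sum (hb : ∀ i, T (b i) = μ i • b i)
    (α : ℝ) (x : E) : ⟪x, T x⟫ - α * ⟪x, x⟫ = ∑ i, (μ i - α) * ⟪b i, x⟫ ^ 2 := by
  rw [← b.sum_inner_mul_inner x (T x), ← b.sum_inner_mul_inner x x, mul_sum, ← sum_sub_distrib]
  refine sum_congr rfl fun i _ => ?_
  rw [b.inner_apply_of_apply_eq_smul hb, real_inner_comm x]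
  ring

theorem OrthonormalBasis.finrank_le_card_ge_of_inner_map_self_eq (hb : ∀ i, T (b i) = μ i • b i)
    {α : ℝ} {W : Submodule ℝ E} (hW : ∀ x ∈ W, ⟪x, T x⟫ = α * ⟪x, x⟫) :
    finrank ℝ W ≤ #{i | α ≤ μ i} := by
  refine W.finrank_le_card_of_inner_eq_zero b _ fun x hx hcoord => ?_
  have hsum : ∑ i, (μ i - α) * ⟪b i, x⟫ ^ 2 = 0 := by
    rw [← b.inner_map_self_sub_eq_sum hb, hW x hx, sub_self]
  have hterm_nonpos : ∀ i ∈ univ, (μ i - α) * ⟪b i, x⟫ ^ 2 ≤ 0 := fun i _ => by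
    by_cases hi : α ≤ μ i
    · simp [hcoord i (by simpa using hi)]
    · exact mul_nonpos_of_nonpos_of_nonneg (by linarith) (sq_nonneg _)
  have hcoord_zero : ∀ i, ⟪b i, x⟫ = 0 := fun i => by
    by_cases hi : α ≤ μ i
    · exact hcoord i (by simpa using hi)
    · have hterm := (sum_eq_zero_iff_of_nonpos hterm_nonpos).mp hsum i (mem_univ i)
      exact pow_eq_zero_iff two_ne_zero |>.mp <|
        (mul_eq_zero.mp hterm).resolve_left (by linarith)
  rw [← b.sum_repr' x]
  simp [hcoord_zero]

theorem OrthonormalBasis.finrank_le_card_le_of_inner_map_self_eq (hb : ∀ i, T (b i) = μ i • b i)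
    {α : ℝ} {W : Submodule ℝ E} (hW : ∀ x ∈ W, ⟪x, T x⟫ = α * ⟪x, x⟫) :
    finrank ℝ W ≤ #{i | μ i ≤ α} := by
  have hb' : ∀ i, (-T) (b i) = -μ i • b i := fun i => by simp [hb, neg_smul]
  have hW' : ∀ x ∈ W, ⟪x, (-T) x⟫ = -α * ⟪x, x⟫ := fun x hx => by
    simp [inner_neg_right, hW x hx]
  simpa using b.finrank_le_card_ge_of_inner_map_self_eq hb' hW'

end RayleighQuotient

namespace Matrix

variable {ι : Type*} [Fintype ι] [DecidableEq ι]

theorem inner_toEuclideanLin_self_of_submatrix_eq_smul_one {A : Matrix ι ι ℝ}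
    {s : Finset ι} {α : ℝ} (hs : A.submatrix ((↑) : s → ι) ((↑) : s → ι) = α • 1)
    {x : EuclideanSpace ℝ ι} (hx : ∀ v ∉ s, x v = 0) :
    ⟪x, toEuclideanLin A x⟫ = α * ⟪x, x⟫ := by
  have hA : ∀ v ∈ s, ∀ w ∈ s, A v w = if v = w then α else 0 := fun v hv w hw => by
    simpa [one_apply, Subtype.ext_iff] using congrFun₂ hs ⟨v, hv⟩ ⟨w, hw⟩
  simp only [EuclideanSpace.inner_eq_star_dotProduct, dotProduct, ofLp_toLpLin, toLin'_apply,
    mulVec, Pi.star_apply, star_trivial, mul_sum]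
  refine sum_congr rfl fun v _ => ?_
  by_cases hv : v ∈ s
  · rw [sum_eq_single v]
    · rw [hA v hv v hv, if_pos rfl]; ring
    · intro w _ hwv
      by_cases hw : w ∈ s
      · simp [hA v hv w hw, hwv.symm]
      · simp [hx w hw]
    · simp
  · simp [hx v hv]

namespace IsHermitian

variable {A : Matrix ι ι ℝ} (hA : A.IsHermitian)

theorem toEuclideanLin_eigenvectorBasis (i : ι) :
    toEuclideanLin A (hA.eigenvectorBasis i) = hA.eigenvalues i • hA.eigenvectorBasis i := by
  simpa [toLpLin_apply] using congrArg (WithLp.toLp 2) (hA.mulVec_eigenvectorBasis i)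

theorem card_le_card_eigenvalues_of_submatrix_eq_smul_one {s : Finset ι} {α : ℝ}
    (hs : A.submatrix ((↑) : s → ι) ((↑) : s → ι) = α • 1) :
    #s ≤ #{i | α ≤ hA.eigenvalues i} ∧ #s ≤ #{i | hA.eigenvalues i ≤ α} := by
  set W := Submodule.span ℝ (Set.range fun v : s => EuclideanSpace.single (v : ι) (1 : ℝ))
  have hWrank : finrank ℝ W = #s := by
    have hindep := (EuclideanSpace.orthonormal_single (𝕜 := ℝ)).linearIndependent.comp _
      (Subtype.val_injective (p := (· ∈ s)))
    exact (finrank_span_eq_card hindep).trans (Fintype.card_coe s)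
  have hWsupp : ∀ x ∈ W, ∀ v ∉ s, x v = 0 := by
    intro x hx v hv
    obtain ⟨c, rfl⟩ := (Submodule.mem_span_range_iff_exists_fun ℝ).mp hx
    simp only [WithLp.ofLp_sum, WithLp.ofLp_smul, PiLp.ofLp_single, Finset.sum_apply,
      Pi.smul_apply, smul_eq_mul]
    exact sum_eq_zero fun w _ => by simp [ne_of_mem_of_not_mem w.2 hv]
  have hW : ∀ x ∈ W, ⟪x, toEuclideanLin A x⟫ = α * ⟪x, x⟫ := fun x hx =>
    inner_toEuclideanLin_self_of_submatrix_eq_smul_one hs (hWsupp x hx)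
  rw [← hWrank]
  exact ⟨hA.eigenvectorBasis.finrank_le_card_ge_of_inner_map_self_eq
      hA.toEuclideanLin_eigenvectorBasis hW,
    hA.eigenvectorBasis.finrank_le_card_le_of_inner_map_self_eq
      hA.toEuclideanLin_eigenvectorBasis hW⟩

end IsHermitian

end Matrix

theorem SimpleGraph.Connected.not_adj_of_degree_eq_one {V : Type*} [Fintype V]
    {G : SimpleGraph V} [DecidableRel G.Adj] (hG : G.Connected) (hV : 3 ≤ Fintype.card V)
    {v w : V} (hv : G.degree v = 1) (hw : G.degree w = 1) : ¬ G.Adj v w := by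
  classical
  intro hvw
  have hclosed : ∀ a ∈ ({v, w} : Finset V), ∀ b, G.Adj a b → b ∈ ({v, w} : Finset V) := by
    simp only [mem_insert, mem_singleton]
    rintro a (rfl | rfl) b hab
    · exact .inr ((degree_eq_one_iff_existsUnique_adj.mp hv).unique hab hvw)
    · exact .inl ((degree_eq_one_iff_existsUnique_adj.mp hw).unique hab hvw.symm)
  obtain ⟨u, hu⟩ : ∃ u, u ∉ ({v, w} : Finset V) := by
    by_contra! h
    have := (card_le_card (s := univ) fun x _ => h x).trans card_le_two
    rw [card_univ] at this
    omega
  obtain ⟨p⟩ := hG.preconnected v u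
  obtain ⟨d, -, hd, hd'⟩ := p.exists_boundary_dart {v, w} (by simp) (by simpa using hu)
  exact hd' (by simpa using hclosed _ (by simpa using hd) _ d.adj)

theorem Aalpha_submatrix_pendant_eq_smul_one {n : ℕ} (hn : 3 ≤ n) {G : SimpleGraph (Fin n)}
    [DecidableRel G.Adj] (hG : G.Connected) (α : ℝ) :
    (Aalpha α G).submatrix ((↑) : ({v | G.degree v = 1} : Finset (Fin n)) → Fin n)
      ((↑) : ({v | G.degree v = 1} : Finset (Fin n)) → Fin n) = α • 1 := by
  ext ⟨v, hv⟩ ⟨w, hw⟩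
  simp only [mem_filter, mem_univ, true_and] at hv hw
  by_cases hvw : v = w
  · subst hvw
    simp [Aalpha, hv]
  · simp [Aalpha, hvw, hG.not_adj_of_degree_eq_one (by simpa using hn) hv hw]

open Finset in
theorem Aalpha_pendant_eigenvalue_count (n : ℕ) (hn : 3 ≤ n)
    (G : SimpleGraph (Fin n)) [DecidableRel G.Adj] (hconn : G.Connected)
    (α : ℝ) :
    (univ.filter fun v : Fin n => G.degree v = 1).card ≤
      (univ.filter fun i : Fin n => α ≤ (Aalpha_isHermitian α G).eigenvalues i).card ∧
    (univ.filter fun v : Fin n => G.degree v = 1).card ≤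
      (univ.filter fun i : Fin n => (Aalpha_isHermitian α G).eigenvalues i ≤ α).card :=
  (Aalpha_isHermitian α G).card_le_card_eigenvalues_of_submatrix_eq_smul_one
    (Aalpha_submatrix_pendant_eq_smul_one hn hconn α)
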